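/- arXiv:2209.14105 — 2 statements merged into one kernel-verified Lean document; each statement's English description precedes it below -/
import Mathlib

section
/- Upper bound in Lemma 1 (adversarial Rademacher complexity, linear class): with F = {x ↦ ⟨θ, x⟩ : ‖θ‖_p ≤ Θ} and F̂ = {(x, y) ↦ min_{‖δ‖∞ ≤ ε} y⟨θ, x + δ⟩ : ‖θ‖_p ≤ Θ}, one has R_S(F̂) ≤ R_S(F) + ε·Θ·d^{1−1/p}/√n. -/
/-!
For `y = ±1` the worst perturbation is `δ = -ε · sign (y θ)`, so the adversarial loss is
`y ⟨θ, x⟩ - ε ‖θ‖₁`. Replacing the sign pattern `σ` by `σ i ↦ y i σ i`, a bijection of sign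
patterns, turns the first term into the Rademacher sum of the linear class, while the penalty
contributes at most `ε · sup ‖θ‖₁ · E |∑ σ i|`. Hölder bounds `‖θ‖₁ ≤ d ^ (1 - 1/p) ‖θ‖_p`, and
`E |∑ σ i| ≤ √(E (∑ σ i)²) = √n` since distinct signs are uncorrelated.
-/

/-- Empirical Rademacher complexity of a function class `F` on sample `x`. -/
noncomputable def empRad {α : Type*} (n : ℕ) (x : Fin n → α) (F : Set (α → ℝ)) : ℝ :=
  (1 / n) * ((1 / 2 ^ n) * ∑ σ : Fin n → Bool,
    sSup {v : ℝ | ∃ f ∈ F, v = ∑ i, (if σ i then (1 : ℝ) else -1) * f (x i)})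

/-- The `ℓ_p` norm of a vector in `ℝ^d` (for real exponent `p`). -/
noncomputable def lpNorm {d : ℕ} (θ : Fin d → ℝ) (p : ℝ) : ℝ :=
  (∑ i, |θ i| ^ p) ^ (1 / p)

open Finset

local notation "±" b:max => if b then (1 : ℝ) else -1

lemma rad_mul_self (b : Bool) : ± b * ± b = 1 := by cases b <;> norm_num

lemma sum_rad_mul_rad {n : ℕ} (i j : Fin n) :
    ∑ σ : Fin n → Bool, ± (σ i) * ± (σ j) = if i = j then 2 ^ n else 0 := by
  split_ifs with hij
  · subst hij
    simp only [rad_mul_self, sum_const, card_univ, Fintype.card_fun, Fintype.card_bool,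
      Fintype.card_fin]
    norm_num
  · let flip : (Fin n → Bool) → Fin n → Bool := fun σ => Function.update σ i (!σ i)
    have hflip : Function.Involutive flip := fun σ => by
      ext k; by_cases hk : k = i <;> simp [flip, hk]
    have hsign : ∀ σ, ± (flip σ i) * ± (flip σ j) = -(± (σ i) * ± (σ j)) := fun σ => by
      simp only [flip, Function.update_self, Function.update_of_ne (Ne.symm hij)]
      cases σ i <;> cases σ j <;> norm_num
    have := hflip.bijective.sum_comp fun σ => ± (σ i) * ± (σ j)
    simp only [hsign, sum_neg_distrib] at this
    linarith

lemma sum_sq_sum_rad (n : ℕ) : ∑ σ : Fin n → Bool, (∑ i, ± (σ i)) ^ 2 = 2 ^ n * n := by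
  simp_rw [sq, sum_mul_sum]
  rw [sum_comm]
  simp_rw [sum_comm (s := univ (α := Fin n → Bool)), sum_rad_mul_rad]
  simp [mul_comm]

lemma avg_abs_sum_rad_le_sqrt (n : ℕ) :
    1 / 2 ^ n * ∑ σ : Fin n → Bool, |∑ i, ± (σ i)| ≤ √n := by
  apply Real.le_sqrt_of_sq_le
  calc (1 / (2 : ℝ) ^ n * ∑ σ : Fin n → Bool, |∑ i, ± (σ i)|) ^ 2
      ≤ (1 / 2 ^ n) ^ 2 * (2 ^ n * ∑ σ : Fin n → Bool, |∑ i, ± (σ i)| ^ 2) := by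
        rw [mul_pow]
        gcongr
        simpa [Fintype.card_fun] using
          sq_sum_le_card_mul_sum_sq (s := univ) (f := fun σ : Fin n → Bool => |∑ i, ± (σ i)|)
    _ = (n : ℝ) := by
        simp_rw [sq_abs, sum_sq_sum_rad]
        field_simp

lemma sum_abs_le_rpow_mul_lpNorm {d : ℕ} {p : ℝ} (hp : 1 ≤ p) (θ : Fin d → ℝ) :
    ∑ j, |θ j| ≤ (d : ℝ) ^ (1 - 1 / p) * lpNorm θ p := by
  simpa [lpNorm, one_div] using Real.inner_le_weight_mul_Lp_of_nonneg univ hp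
    (fun _ => 1) (fun j => |θ j|) (fun _ => zero_le_one) (fun j => abs_nonneg (θ j))

lemma abs_sum_mul_le_sum_abs_mul_norm {d : ℕ} (θ v : Fin d → ℝ) :
    |∑ j, θ j * v j| ≤ (∑ j, |θ j|) * ‖v‖ := by
  rw [sum_mul]
  refine (abs_sum_le_sum_abs _ _).trans (sum_le_sum fun j _ => ?_)
  rw [abs_mul, ← Real.norm_eq_abs (v j)]
  exact mul_le_mul_of_nonneg_left (norm_le_pi_norm v j) (abs_nonneg _)

lemma isLeast_add_sum_mul_of_abs_le {ι : Type*} [Fintype ι] {ε : ℝ} (hε : 0 ≤ ε) (a : ℝ)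
    (c : ι → ℝ) :
    IsLeast {v | ∃ δ : ι → ℝ, (∀ j, |δ j| ≤ ε) ∧ v = a + ∑ j, c j * δ j}
      (a - ε * ∑ j, |c j|) := by
  have hworst : ∀ j, c j * (if 0 ≤ c j then -ε else ε) = -(ε * |c j|) := fun j => by
    split_ifs with h
    · rw [abs_of_nonneg h]; ring
    · rw [abs_of_neg (not_le.mp h)]; ring
  refine ⟨⟨fun j => if 0 ≤ c j then -ε else ε, fun j => ?_, ?_⟩, ?_⟩
  · dsimp only
    split_ifs <;> simp [abs_of_nonneg hε]
  · simp only [hworst, sum_neg_distrib, mul_sum, sub_eq_add_neg]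
  · rintro _ ⟨δ, hδ, rfl⟩
    rw [sub_eq_add_neg, mul_sum, ← sum_neg_distrib]
    refine add_le_add_right (sum_le_sum fun j _ => neg_le_of_abs_le ?_) a
    rw [abs_mul, mul_comm ε]
    exact mul_le_mul_of_nonneg_left (hδ j) (abs_nonneg _)

lemma sInf_adversarial {d : ℕ} {ε : ℝ} (hε : 0 ≤ ε) (θ x : Fin d → ℝ) (y : ℝ) :
    sInf {v | ∃ δ : Fin d → ℝ, (∀ j, |δ j| ≤ ε) ∧ v = y * ∑ j, θ j * (x j + δ j)} =
      y * ∑ j, θ j * x j - ε * |y| * ∑ j, |θ j| := by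
  have hsplit : ∀ δ : Fin d → ℝ,
      y * ∑ j, θ j * (x j + δ j) = y * ∑ j, θ j * x j + ∑ j, (y * θ j) * δ j := fun δ => by
    simp only [mul_add, sum_add_distrib, mul_sum, mul_assoc]
  simp_rw [hsplit]
  rw [(isLeast_add_sum_mul_of_abs_le hε _ _).csInf_eq]
  simp only [abs_mul, ← mul_sum]
  ring

def linearClass {d : ℕ} (T : Set (Fin d → ℝ)) : Set ((Fin d → ℝ) → ℝ) :=
  {f | ∃ θ ∈ T, f = fun v => ∑ j, θ j * v j}

noncomputable def advClass {d : ℕ} (ε : ℝ) (T : Set (Fin d → ℝ)) :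
    Set ((Fin d → ℝ) × ℝ → ℝ) :=
  {g | ∃ θ ∈ T, g = fun xy => sInf {v | ∃ δ : Fin d → ℝ, (∀ j, |δ j| ≤ ε) ∧
    v = xy.2 * ∑ j, θ j * (xy.1 j + δ j)}}

noncomputable def radSup {α : Type*} (n : ℕ) (x : Fin n → α) (F : Set (α → ℝ))
    (σ : Fin n → Bool) : ℝ :=
  sSup {v | ∃ f ∈ F, v = ∑ i, ± (σ i) * f (x i)}

lemma empRad_eq {α : Type*} (n : ℕ) (x : Fin n → α) (F : Set (α → ℝ)) :
    empRad n x F = 1 / n * (1 / 2 ^ n * ∑ σ, radSup n x F σ) := rfl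

lemma empRad_le_empRad_add {α β : Type*} {n : ℕ} {x : Fin n → α} {x' : Fin n → β}
    {F : Set (α → ℝ)} {G : Set (β → ℝ)} {τ : (Fin n → Bool) → Fin n → Bool}
    (hτ : Function.Bijective τ) (c : (Fin n → Bool) → ℝ)
    (h : ∀ σ, radSup n x' G σ ≤ radSup n x F (τ σ) + c σ) :
    empRad n x' G ≤ empRad n x F + 1 / n * (1 / 2 ^ n * ∑ σ, c σ) := by
  rw [empRad_eq, empRad_eq, ← hτ.sum_comp (radSup n x F), ← mul_add, ← mul_add,
    ← sum_add_distrib]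
  gcongr with σ
  exact h σ

noncomputable def flipSigns {n : ℕ} (y : Fin n → ℝ) (σ : Fin n → Bool) : Fin n → Bool :=
  fun i => if y i = 1 then σ i else !σ i

lemma flipSigns_involutive {n : ℕ} (y : Fin n → ℝ) : Function.Involutive (flipSigns y) :=
  fun σ => funext fun i => by by_cases h : y i = 1 <;> simp [flipSigns, h]

lemma rad_flipSigns {n : ℕ} {y : Fin n → ℝ} {i : Fin n} (hy : y i = 1 ∨ y i = -1)
    (σ : Fin n → Bool) : ± (flipSigns y σ i) = y i * ± (σ i) := by
  unfold flipSigns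
  rcases hy with h | h <;> rw [h] <;> cases σ i <;> norm_num

section LinearClass

variable {d n : ℕ} {T : Set (Fin d → ℝ)} {K : ℝ}

lemma bddAbove_radSup_linearClass (hK : ∀ θ ∈ T, ∑ j, |θ j| ≤ K) (x : Fin n → Fin d → ℝ)
    (σ : Fin n → Bool) :
    BddAbove {v | ∃ f ∈ linearClass T, v = ∑ i, ± (σ i) * f (x i)} := by
  refine ⟨∑ i, K * ‖x i‖, ?_⟩
  rintro _ ⟨_, ⟨θ, hθ, rfl⟩, rfl⟩
  refine sum_le_sum fun i _ => ?_
  calc ± (σ i) * ∑ j, θ j * x i j ≤ |∑ j, θ j * x i j| := by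
        cases σ i
        · simpa using neg_le_abs _
        · simpa using le_abs_self _
    _ ≤ (∑ j, |θ j|) * ‖x i‖ := abs_sum_mul_le_sum_abs_mul_norm θ (x i)
    _ ≤ K * ‖x i‖ := by gcongr; exact hK θ hθ

lemma radSup_advClass_le {ε : ℝ} (hε : 0 ≤ ε) (hT : T.Nonempty)
    (hK : ∀ θ ∈ T, ∑ j, |θ j| ≤ K) (x : Fin n → Fin d → ℝ) {y : Fin n → ℝ}
    (hy : ∀ i, y i = 1 ∨ y i = -1) (σ : Fin n → Bool) :
    radSup n (fun i => (x i, y i)) (advClass ε T) σ ≤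
      radSup n x (linearClass T) (flipSigns y σ) + ε * K * |∑ i, ± (σ i)| := by
  obtain ⟨θ₀, hθ₀⟩ := hT
  refine csSup_le ⟨_, _, ⟨θ₀, hθ₀, rfl⟩, rfl⟩ ?_
  rintro _ ⟨_, ⟨θ, hθ, rfl⟩, rfl⟩
  have habs : ∀ i, |y i| = 1 := fun i => by rcases hy i with h | h <;> simp [h]
  have hsplit : ∑ i, ± (σ i) * (y i * ∑ j, θ j * x i j - ε * |y i| * ∑ j, |θ j|) =
      ∑ i, ± (flipSigns y σ i) * ∑ j, θ j * x i j -
        ε * (∑ j, |θ j|) * ∑ i, ± (σ i) := by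
    rw [mul_sum, ← sum_sub_distrib]
    refine sum_congr rfl fun i _ => ?_
    rw [habs, rad_flipSigns (hy i)]
    ring
  simp only [sInf_adversarial hε, hsplit]
  have hlin : ∑ i, ± (flipSigns y σ i) * ∑ j, θ j * x i j ≤
      radSup n x (linearClass T) (flipSigns y σ) :=
    le_csSup (bddAbove_radSup_linearClass hK x _) ⟨_, ⟨θ, hθ, rfl⟩, rfl⟩
  have hpen : -(ε * (∑ j, |θ j|) * ∑ i, ± (σ i)) ≤ ε * K * |∑ i, ± (σ i)| := by
    rw [← mul_neg, mul_assoc, mul_assoc]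
    gcongr ε * ?_
    exact (mul_le_mul_of_nonneg_left (neg_le_abs _) (sum_nonneg fun j _ => abs_nonneg _)).trans
      (mul_le_mul_of_nonneg_right (hK θ hθ) (abs_nonneg _))
  linarith

end LinearClass

/-- Upper bound of Lemma 1: for the linear class `F = {x ↦ ⟨θ,x⟩ : ‖θ‖_p ≤ Θ}` and the
adversarial class `F̂ = {(x,y) ↦ min_{‖δ‖∞ ≤ ε} y⟨θ, x+δ⟩ : ‖θ‖_p ≤ Θ}`,
`R_S(F̂) ≤ R_S(F) + εΘd^(1−1/p)/√n`. -/
theorem adv_empRad_upper (d n : ℕ) (p : ℝ) (hp : 1 ≤ p) (ε Θ : ℝ)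
    (hε : 0 ≤ ε) (hΘ : 0 ≤ Θ)
    (x : Fin n → (Fin d → ℝ)) (y : Fin n → ℝ) (hy : ∀ i, y i = 1 ∨ y i = -1) :
    empRad n (fun i => (x i, y i))
        {g : (Fin d → ℝ) × ℝ → ℝ | ∃ θ : Fin d → ℝ, lpNorm θ p ≤ Θ ∧
          g = fun xy => sInf {v : ℝ | ∃ δ : Fin d → ℝ, (∀ j, |δ j| ≤ ε) ∧
            v = xy.2 * ∑ j, θ j * (xy.1 j + δ j)}} ≤
      empRad n x {f : (Fin d → ℝ) → ℝ | ∃ θ : Fin d → ℝ, lpNorm θ p ≤ Θ ∧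
          f = fun v => ∑ j, θ j * v j} +
        ε * Θ * (d : ℝ) ^ (1 - 1 / p) / Real.sqrt n := by
  set T : Set (Fin d → ℝ) := {θ | lpNorm θ p ≤ Θ}
  set K := Θ * (d : ℝ) ^ (1 - 1 / p)
  have hK : ∀ θ ∈ T, ∑ j, |θ j| ≤ K := fun θ hθ =>
    (sum_abs_le_rpow_mul_lpNorm hp θ).trans <|
      (mul_le_mul_of_nonneg_left hθ (by positivity)).trans_eq (mul_comm _ _)
  have hT : (0 : Fin d → ℝ) ∈ T := by
    have hp0 : p ≠ 0 := by positivity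
    simpa [T, lpNorm, Real.zero_rpow hp0, Real.zero_rpow (inv_ne_zero hp0)] using hΘ
  change empRad n _ (advClass ε T) ≤ empRad n x (linearClass T) + _
  calc _ ≤ empRad n x (linearClass T) + 1 / n * (1 / 2 ^ n * ∑ σ : Fin n → Bool,
          ε * K * |∑ i, ± (σ i)|) :=
        empRad_le_empRad_add (flipSigns_involutive y).bijective _
          (radSup_advClass_le hε ⟨0, hT⟩ hK x hy)
    _ ≤ empRad n x (linearClass T) + 1 / n * (ε * K * √n) := by
        rw [← mul_sum, mul_left_comm (1 / (2 : ℝ) ^ n)]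
        gcongr
        exact avg_abs_sum_rad_le_sqrt n
    _ = _ := by
        have hsqrt : √(n : ℝ) * (1 / n) = 1 / √n := by
          rw [← div_eq_mul_one_div, Real.sqrt_div_self']
        rw [mul_comm (1 / (n : ℝ)), mul_assoc, hsqrt]
        ring
end

section
/- If a weight class is constrained by ‖θ‖₁ ≤ b as well as ‖θ‖_p ≤ s, then the adversarial Rademacher complexity bound improves to R_S(F̂) ≤ R_S(F) + ε·b/√n, with no explicit dependence on the dimension d. -/
open Finset

def boolSign (a : Bool) : ℝ := if a then 1 else -1

@[simp] lemma abs_boolSign (a : Bool) : |boolSign a| = 1 := by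
  cases a <;> norm_num [boolSign]

@[simp] lemma boolSign_not (a : Bool) : boolSign (!a) = -boolSign a := by
  cases a <;> norm_num [boolSign]

@[simp] lemma boolSign_mul_self (a : Bool) : boolSign a * boolSign a = 1 := by
  cases a <;> norm_num [boolSign]

lemma boolSign_mul_boolSign (a c : Bool) : boolSign a * boolSign c = boolSign (a == c) := by
  cases a <;> cases c <;> norm_num [boolSign]

lemma exists_boolSign_eq {ι : Type*} {y : ι → ℝ} (hy : ∀ i, y i = 1 ∨ y i = -1) :
    ∃ τ : ι → Bool, y = fun i => boolSign (τ i) := by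
  refine ⟨fun i => decide (y i = 1), funext fun i => ?_⟩
  rcases hy i with h | h <;> norm_num [h, boolSign]

section Orthogonality

variable {ι : Type*} [Fintype ι] [DecidableEq ι]

lemma sum_boolSign_mul_boolSign (i j : ι) :
    ∑ σ : ι → Bool, boolSign (σ i) * boolSign (σ j) = if i = j then 2 ^ Fintype.card ι else 0 := by
  split_ifs with hij
  · subst hij
    simp
  · -- flipping the `j`-th sign is an involution that negates every summand
    set flipAt : (ι → Bool) → ι → Bool := fun σ => Function.update σ j (!σ j)
    have hflip : Function.Involutive flipAt := fun σ => by
      ext k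
      by_cases hk : k = j
      · subst hk; simp [flipAt]
      · simp [flipAt, Function.update_of_ne hk]
    have hneg := Fintype.sum_bijective flipAt hflip.bijective
      (fun σ => boolSign (σ i) * boolSign (σ j)) (fun σ => -(boolSign (σ i) * boolSign (σ j)))
      fun σ => by
        simp only [flipAt, Function.update_self, Function.update_of_ne hij, boolSign_not]
        ring
    rw [sum_neg_distrib] at hneg
    linarith

lemma sum_sq_sum_boolSign :
    ∑ σ : ι → Bool, (∑ i, boolSign (σ i)) ^ 2 = Fintype.card ι * 2 ^ Fintype.card ι := by
  simp_rw [sq, sum_mul_sum]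
  rw [sum_comm]
  simp_rw [sum_comm (s := (univ : Finset (ι → Bool))), sum_boolSign_mul_boolSign, sum_ite_eq,
    mem_univ, if_true, sum_const, card_univ, nsmul_eq_mul]

lemma sum_abs_sum_boolSign_le :
    ∑ σ : ι → Bool, |∑ i, boolSign (σ i)| ≤ 2 ^ Fintype.card ι * √(Fintype.card ι) := by
  have hcs := sq_sum_le_card_mul_sum_sq (s := (univ : Finset (ι → Bool)))
    (f := fun σ => |∑ i, boolSign (σ i)|)
  simp only [sq_abs, sum_sq_sum_boolSign, card_univ, Fintype.card_fun, Fintype.card_bool] at hcs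
  rw [← Real.sqrt_sq (by positivity : (0 : ℝ) ≤ 2 ^ Fintype.card ι),
    ← Real.sqrt_mul (by positivity)]
  refine (Real.le_sqrt (sum_nonneg fun _ _ => abs_nonneg _) (by positivity)).2 ?_
  calc _ ≤ _ := hcs
    _ = _ := by push_cast; ring

end Orthogonality

lemma mean_abs_sum_boolSign_le (n : ℕ) :
    1 / n * (1 / 2 ^ n * ∑ σ : Fin n → Bool, |∑ i, boolSign (σ i)|) ≤ 1 / √n := by
  have h := sum_abs_sum_boolSign_le (ι := Fin n)
  rw [Fintype.card_fin] at h
  calc 1 / n * (1 / 2 ^ n * ∑ σ : Fin n → Bool, |∑ i, boolSign (σ i)|)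
      ≤ 1 / n * (1 / 2 ^ n * (2 ^ n * √n)) := by gcongr
    _ = 1 / √n := by rw [← Real.sqrt_div_self']; field_simp

lemma isLeast_sum_mul_of_abs_le {ι : Type*} [Fintype ι] {ε : ℝ} (hε : 0 ≤ ε) (c : ι → ℝ) :
    IsLeast {u | ∃ δ : ι → ℝ, (∀ j, |δ j| ≤ ε) ∧ u = ∑ j, c j * δ j} (-(ε * ∑ j, |c j|)) := by
  refine ⟨⟨fun j => if 0 ≤ c j then -ε else ε, fun j => ?_, ?_⟩, ?_⟩
  · dsimp only
    split_ifs <;> simp [abs_of_nonneg hε]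
  · rw [mul_sum, ← sum_neg_distrib]
    refine sum_congr rfl fun j _ => ?_
    dsimp only
    split_ifs with h
    · rw [abs_of_nonneg h]; ring
    · rw [abs_of_neg (not_le.1 h)]; ring
  · rintro _ ⟨δ, hδ, rfl⟩
    rw [mul_sum, ← sum_neg_distrib]
    refine sum_le_sum fun j _ => ?_
    have : |c j * δ j| ≤ ε * |c j| := by
      rw [abs_mul, mul_comm ε]; exact mul_le_mul_of_nonneg_left (hδ j) (abs_nonneg _)
    linarith [neg_abs_le (c j * δ j)]

lemma sInf_adversarial_linear {ι : Type*} [Fintype ι] {ε : ℝ} (hε : 0 ≤ ε) (θ v : ι → ℝ) (t : ℝ) :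
    sInf {u | ∃ δ : ι → ℝ, (∀ j, |δ j| ≤ ε) ∧ u = t * ∑ j, θ j * (v j + δ j)} =
      t * ∑ j, θ j * v j - ε * |t| * ∑ j, |θ j| := by
  have hset : {u | ∃ δ : ι → ℝ, (∀ j, |δ j| ≤ ε) ∧ u = t * ∑ j, θ j * (v j + δ j)} =
      (t * ∑ j, θ j * v j + ·) '' {u | ∃ δ : ι → ℝ, (∀ j, |δ j| ≤ ε) ∧ u = ∑ j, t * θ j * δ j} := by
    have hsplit : ∀ δ : ι → ℝ,
        t * ∑ j, θ j * (v j + δ j) = t * ∑ j, θ j * v j + ∑ j, t * θ j * δ j := fun δ => by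
      rw [mul_sum, mul_sum, ← sum_add_distrib]
      exact sum_congr rfl fun j _ => by ring
    ext u
    constructor
    · rintro ⟨δ, hδ, rfl⟩
      exact ⟨_, ⟨δ, hδ, rfl⟩, (hsplit δ).symm⟩
    · rintro ⟨_, ⟨δ, hδ, rfl⟩, rfl⟩
      exact ⟨δ, hδ, (hsplit δ).symm⟩
  rw [hset]
  refine ((monotone_id.const_add _).map_isLeast (isLeast_sum_mul_of_abs_le hε _)).csInf_eq.trans ?_
  simp only [id_eq, abs_mul, ← mul_sum]
  ring

lemma abs_sum_mul_le {ι : Type*} [Fintype ι] (θ v : ι → ℝ) :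
    |∑ j, θ j * v j| ≤ (∑ j, |θ j|) * ‖v‖ := by
  rw [sum_mul]
  refine (abs_sum_le_sum_abs _ _).trans (sum_le_sum fun j _ => ?_)
  rw [abs_mul, ← Real.norm_eq_abs (v j)]
  exact mul_le_mul_of_nonneg_left (norm_le_pi_norm v j) (abs_nonneg _)

section Rademacher

variable {α : Type*} {n : ℕ}

noncomputable def rademacherSup (z : Fin n → α) (F : Set (α → ℝ)) (σ : Fin n → Bool) : ℝ :=
  sSup {v | ∃ f ∈ F, v = ∑ i, boolSign (σ i) * f (z i)}

lemma empRad_eq_sum_rademacherSup (z : Fin n → α) (F : Set (α → ℝ)) :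
    empRad n z F = 1 / n * (1 / 2 ^ n * ∑ σ, rademacherSup z F σ) := rfl

lemma bddAbove_rademacher {z : Fin n → α} {F : Set (α → ℝ)}
    (hF : ∀ i, ∃ M, ∀ f ∈ F, |f (z i)| ≤ M) (σ : Fin n → Bool) :
    BddAbove {v | ∃ f ∈ F, v = ∑ i, boolSign (σ i) * f (z i)} := by
  choose M hM using hF
  refine ⟨∑ i, M i, ?_⟩
  rintro _ ⟨f, hf, rfl⟩
  refine sum_le_sum fun i _ => (le_abs_self _).trans ?_
  rw [abs_mul, abs_boolSign, one_mul]
  exact hM i f hf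

lemma rademacherSup_mul_labels (x : Fin n → α) (τ : Fin n → Bool) (F : Set (α → ℝ))
    (σ : Fin n → Bool) :
    rademacherSup (fun i => (x i, boolSign (τ i))) ((fun f xy => xy.2 * f xy.1) '' F) σ =
      rademacherSup x F (fun i => σ i == τ i) := by
  have hsum : ∀ f : α → ℝ, ∑ i, boolSign (σ i) * (boolSign (τ i) * f (x i)) =
      ∑ i, boolSign (σ i == τ i) * f (x i) := fun f =>
    sum_congr rfl fun i _ => by rw [← mul_assoc, boolSign_mul_boolSign]
  simp only [rademacherSup, Set.exists_mem_image, hsum]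

lemma empRad_mul_labels (x : Fin n → α) (τ : Fin n → Bool) (F : Set (α → ℝ)) :
    empRad n (fun i => (x i, boolSign (τ i))) ((fun f xy => xy.2 * f xy.1) '' F) =
      empRad n x F := by
  have hinv : Function.Involutive fun (σ : Fin n → Bool) i => σ i == τ i := fun σ => by
    funext i; dsimp only; cases σ i <;> cases τ i <;> rfl
  simp only [empRad_eq_sum_rademacherSup, rademacherSup_mul_labels]
  rw [Fintype.sum_bijective _ hinv.bijective _ (rademacherSup x F) fun _ => rfl]

variable {β : Type*} {Θ : Set β} {φ ψ : β → α → ℝ} {z : Fin n → α} {B : ℝ}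

lemma rademacherSup_image_le_add (hB : 0 ≤ B) (hψ : ∀ i, ∃ M, ∀ θ ∈ Θ, |ψ θ (z i)| ≤ M)
    (hφψ : ∀ θ ∈ Θ, ∃ k, |k| ≤ B ∧ ∀ i, φ θ (z i) = ψ θ (z i) + k) (σ : Fin n → Bool) :
    rademacherSup z (φ '' Θ) σ ≤ rademacherSup z (ψ '' Θ) σ + B * |∑ i, boolSign (σ i)| := by
  rcases Θ.eq_empty_or_nonempty with rfl | ⟨θ₀, hθ₀⟩
  · simp only [rademacherSup, Set.image_empty, Set.mem_empty_iff_false, false_and, exists_false,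
      Set.ofPred_false, Real.sSup_empty, zero_add]
    positivity
  have hbdd := bddAbove_rademacher (F := ψ '' Θ) (z := z)
    (fun i => (hψ i).imp fun _ hM => Set.forall_mem_image.2 hM) σ
  refine csSup_le ⟨_, _, ⟨θ₀, hθ₀, rfl⟩, rfl⟩ ?_
  rintro _ ⟨_, ⟨θ, hθ, rfl⟩, rfl⟩
  obtain ⟨k, hk, hφ⟩ := hφψ θ hθ
  calc ∑ i, boolSign (σ i) * φ θ (z i)
      = ∑ i, boolSign (σ i) * ψ θ (z i) + k * ∑ i, boolSign (σ i) := by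
        rw [mul_sum]
        simp only [hφ, mul_add, sum_add_distrib, mul_comm k]
    _ ≤ rademacherSup z (ψ '' Θ) σ + B * |∑ i, boolSign (σ i)| := by
        refine add_le_add (le_csSup hbdd ⟨_, ⟨θ, hθ, rfl⟩, rfl⟩) ?_
        calc k * ∑ i, boolSign (σ i) ≤ |k| * |∑ i, boolSign (σ i)| :=
              (le_abs_self _).trans (abs_mul _ _).le
          _ ≤ B * |∑ i, boolSign (σ i)| := by gcongr

lemma empRad_image_le_add (hB : 0 ≤ B) (hψ : ∀ i, ∃ M, ∀ θ ∈ Θ, |ψ θ (z i)| ≤ M)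
    (hφψ : ∀ θ ∈ Θ, ∃ k, |k| ≤ B ∧ ∀ i, φ θ (z i) = ψ θ (z i) + k) :
    empRad n z (φ '' Θ) ≤ empRad n z (ψ '' Θ) + B / √n := by
  simp only [empRad_eq_sum_rademacherSup]
  calc 1 / n * (1 / 2 ^ n * ∑ σ, rademacherSup z (φ '' Θ) σ)
      ≤ 1 / n * (1 / 2 ^ n * ∑ σ, (rademacherSup z (ψ '' Θ) σ + B * |∑ i, boolSign (σ i)|)) := by
        gcongr with σ
        exact rademacherSup_image_le_add hB hψ hφψ σ
    _ = 1 / n * (1 / 2 ^ n * ∑ σ, rademacherSup z (ψ '' Θ) σ) +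
          B * (1 / n * (1 / 2 ^ n * ∑ σ : Fin n → Bool, |∑ i, boolSign (σ i)|)) := by
        rw [sum_add_distrib, ← mul_sum]; ring
    _ ≤ 1 / n * (1 / 2 ^ n * ∑ σ, rademacherSup z (ψ '' Θ) σ) + B / √n := by
        rw [div_eq_mul_one_div B]
        gcongr
        exact mean_abs_sum_boolSign_le n

end Rademacher

theorem adv_empRad_upper_l1_general (d n : ℕ) (p : ℝ) (ε s b : ℝ)
    (hε : 0 ≤ ε) (hb : 0 ≤ b)
    (x : Fin n → (Fin d → ℝ)) (y : Fin n → ℝ) (hy : ∀ i, y i = 1 ∨ y i = -1) :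
    empRad n (fun i => (x i, y i))
        {g : (Fin d → ℝ) × ℝ → ℝ | ∃ θ : Fin d → ℝ,
          lpNorm θ p ≤ s ∧ (∑ j, |θ j|) ≤ b ∧
          g = fun xy => sInf {v : ℝ | ∃ δ : Fin d → ℝ, (∀ j, |δ j| ≤ ε) ∧
            v = xy.2 * ∑ j, θ j * (xy.1 j + δ j)}} ≤
      empRad n x {f : (Fin d → ℝ) → ℝ | ∃ θ : Fin d → ℝ,
          lpNorm θ p ≤ s ∧ (∑ j, |θ j|) ≤ b ∧ f = fun v => ∑ j, θ j * v j} +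
        ε * b / Real.sqrt n := by
  obtain ⟨τ, rfl⟩ := exists_boolSign_eq hy
  set Θ : Set (Fin d → ℝ) := {θ | lpNorm θ p ≤ s ∧ ∑ j, |θ j| ≤ b}
  have hadv : {g : (Fin d → ℝ) × ℝ → ℝ | ∃ θ : Fin d → ℝ, lpNorm θ p ≤ s ∧ (∑ j, |θ j|) ≤ b ∧
      g = fun xy => sInf {v : ℝ | ∃ δ : Fin d → ℝ, (∀ j, |δ j| ≤ ε) ∧
        v = xy.2 * ∑ j, θ j * (xy.1 j + δ j)}} =
      (fun θ xy => xy.2 * ∑ j, θ j * xy.1 j - ε * |xy.2| * ∑ j, |θ j|) '' Θ := by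
    ext g
    simp only [sInf_adversarial_linear hε, Set.mem_image, Set.mem_ofPred_eq, Θ, and_assoc, eq_comm]
  have hlin : {f : (Fin d → ℝ) → ℝ | ∃ θ : Fin d → ℝ, lpNorm θ p ≤ s ∧ (∑ j, |θ j|) ≤ b ∧
      f = fun v => ∑ j, θ j * v j} = (fun θ v => ∑ j, θ j * v j) '' Θ := by
    ext f
    simp only [Set.mem_image, Set.mem_ofPred_eq, Θ, and_assoc, eq_comm]
  rw [hadv, hlin, ← empRad_mul_labels x τ, Set.image_image]
  refine empRad_image_le_add (mul_nonneg hε hb) (fun i => ⟨b * ‖x i‖, fun θ hθ => ?_⟩)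
    fun θ hθ => ⟨-(ε * ∑ j, |θ j|), ?_, fun i => ?_⟩
  · rw [abs_mul, abs_boolSign, one_mul]
    exact (abs_sum_mul_le θ (x i)).trans (by gcongr; exact hθ.2)
  · rw [abs_neg, abs_of_nonneg (by positivity)]
    exact mul_le_mul_of_nonneg_left hθ.2 hε
  · simp only [abs_boolSign]; ring

/-- With an additional `ℓ₁` constraint `‖θ‖₁ ≤ b` on the weight class, the adversarial
Rademacher complexity bound improves to `R_S(F̂) ≤ R_S(F) + εb/√n`, with no explicit
dependence on the dimension `d`. -/
theorem adv_empRad_upper_l1 (d n : ℕ) (p : ℝ) (hp : 1 ≤ p) (ε s b : ℝ)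
    (hε : 0 ≤ ε) (hs : 0 ≤ s) (hb : 0 ≤ b)
    (x : Fin n → (Fin d → ℝ)) (y : Fin n → ℝ) (hy : ∀ i, y i = 1 ∨ y i = -1) :
    empRad n (fun i => (x i, y i))
        {g : (Fin d → ℝ) × ℝ → ℝ | ∃ θ : Fin d → ℝ,
          lpNorm θ p ≤ s ∧ (∑ j, |θ j|) ≤ b ∧
          g = fun xy => sInf {v : ℝ | ∃ δ : Fin d → ℝ, (∀ j, |δ j| ≤ ε) ∧
            v = xy.2 * ∑ j, θ j * (xy.1 j + δ j)}} ≤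
      empRad n x {f : (Fin d → ℝ) → ℝ | ∃ θ : Fin d → ℝ,
          lpNorm θ p ≤ s ∧ (∑ j, |θ j|) ≤ b ∧ f = fun v => ∑ j, θ j * v j} +
        ε * b / Real.sqrt n :=
  adv_empRad_upper_l1_general d n p ε s b hε hb x y hy
end
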